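/- The coupled RCNN recurrence c^{(1)}_t = λ_t·c^{(1)}_{t-1} + u^{(1)}_t, c^{(2)}_t = λ_t·c^{(2)}_{t-1} + c^{(1)}_{t-1}·u^{(2)}_t (with c^{(1)}_0 = c^{(2)}_0 = 0), where λ_t, u^{(1)}_t, u^{(2)}_t depend only on x_t, satisfies: c^{(2)}_t equals the score assigned by the three-state WFSA C (with μ_j(x_t) = u^{(j)}_t and φ_1(x_t) = φ_2(x_t) = λ_t) to the prefix x_1…x_t. -/
import Mathlib


/-- Transition weights of the three-state WFSA `C` over the real semiring. -/
def cTau {A : Type*} (μ1 φ1 μ2 φ2 : A → ℝ) : Fin 3 → Fin 3 → A → ℝ := fun q q' a =>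
  if q = 0 ∧ q' = 0 then 1
  else if q = 0 ∧ q' = 1 then μ1 a
  else if q = 1 ∧ q' = 1 then φ1 a
  else if q = 1 ∧ q' = 2 then μ2 a
  else if q = 2 ∧ q' = 2 then φ2 a
  else 0

/-- Score assigned by WFSA `C` (initial weight 1 on `q0`, final weight 1 on `q2`)
to the prefix `x_1 … x_t`. -/
noncomputable def cScore {A : Type*} (μ1 φ1 μ2 φ2 : A → ℝ) (x : ℕ → A) (t : ℕ) : ℝ :=
  ∑ p : Fin (t + 1) → Fin 3,
    (if p 0 = 0 then (1 : ℝ) else 0) *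
      (∏ i : Fin t, cTau μ1 φ1 μ2 φ2 (p i.castSucc) (p i.succ) (x (i.1 + 1))) *
      (if p (Fin.last t) = 2 then (1 : ℝ) else 0)

noncomputable def pSum {A : Type*} (μ1 φ1 μ2 φ2 : A → ℝ) (x : ℕ → A) (t : ℕ) (j : Fin 3) : ℝ :=
  ∑ p : Fin (t + 1) → Fin 3,
    (if p 0 = 0 then (1 : ℝ) else 0) *
      (∏ i : Fin t, cTau μ1 φ1 μ2 φ2 (p i.castSucc) (p i.succ) (x (i.1 + 1))) *
      (if p (Fin.last t) = j then (1 : ℝ) else 0)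

lemma pSum_zero {A : Type*} (μ1 φ1 μ2 φ2 : A → ℝ) (x : ℕ → A) (j : Fin 3) :
    pSum μ1 φ1 μ2 φ2 x 0 j = if (0 : Fin 3) = j then 1 else 0 := by
  rw [pSum, ← Equiv.sum_comp (Equiv.funUnique (Fin 1) (Fin 3)).symm]
  simp [Fin.sum_univ_three, Fin.last, eq_comm]

lemma pSum_succ {A : Type*} (μ1 φ1 μ2 φ2 : A → ℝ) (x : ℕ → A) (t : ℕ) (j : Fin 3) :
    pSum μ1 φ1 μ2 φ2 x (t + 1) j
      = ∑ k : Fin 3, pSum μ1 φ1 μ2 φ2 x t k * cTau μ1 φ1 μ2 φ2 k j (x (t + 1)) := by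
  rw [pSum, ← Equiv.sum_comp (Fin.snocEquiv (fun _ => Fin 3)), Fintype.sum_prod_type]
  simp only [Fin.snocEquiv_apply]
  have key : ∀ (q : Fin 3) (p : Fin (t + 1) → Fin 3),
      (if (Fin.snoc p q : Fin (t + 2) → Fin 3) 0 = 0 then (1 : ℝ) else 0) *
        (∏ i : Fin (t + 1), cTau μ1 φ1 μ2 φ2 ((Fin.snoc p q : Fin (t + 2) → Fin 3) i.castSucc)
          ((Fin.snoc p q : Fin (t + 2) → Fin 3) i.succ) (x (i.1 + 1))) *
        (if (Fin.snoc p q : Fin (t + 2) → Fin 3) (Fin.last (t + 1)) = j then (1 : ℝ) else 0)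
      = ((if p 0 = 0 then (1 : ℝ) else 0) *
          (∏ i : Fin t, cTau μ1 φ1 μ2 φ2 (p i.castSucc) (p i.succ) (x (i.1 + 1))) *
          cTau μ1 φ1 μ2 φ2 (p (Fin.last t)) q (x (t + 1))) *
        (if q = j then (1 : ℝ) else 0) := by
    intro q p
    rw [Fin.prod_univ_castSucc]
    have h0 : (Fin.snoc p q : Fin (t + 2) → Fin 3) (0 : Fin (t + 2)) = p 0 := by
      rw [show (0 : Fin (t + 2)) = Fin.castSucc 0 from rfl, Fin.snoc_castSucc]
    have hlast : (Fin.snoc p q : Fin (t + 2) → Fin 3) (Fin.last (t + 1)) = q := by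
      rw [Fin.snoc_last]
    have hstep : ∀ i : Fin t,
        cTau μ1 φ1 μ2 φ2 ((Fin.snoc p q : Fin (t + 2) → Fin 3) i.castSucc.castSucc)
          ((Fin.snoc p q : Fin (t + 2) → Fin 3) i.castSucc.succ) (x (i.castSucc.1 + 1))
        = cTau μ1 φ1 μ2 φ2 (p i.castSucc) (p i.succ) (x (i.1 + 1)) := by
      intro i
      rw [Fin.succ_castSucc, Fin.snoc_castSucc, Fin.snoc_castSucc]
      simp
    have hlaststep : cTau μ1 φ1 μ2 φ2 ((Fin.snoc p q : Fin (t + 2) → Fin 3) (Fin.last t).castSucc)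
        ((Fin.snoc p q : Fin (t + 2) → Fin 3) (Fin.last t).succ) (x ((Fin.last t).1 + 1))
        = cTau μ1 φ1 μ2 φ2 (p (Fin.last t)) q (x (t + 1)) := by
      rw [Fin.snoc_castSucc, Fin.succ_last, Fin.snoc_last]
      rfl
    rw [h0, hlast, Finset.prod_congr rfl (fun i _ => hstep i), hlaststep]
    ring
  rw [Finset.sum_congr rfl fun q _ => Finset.sum_congr rfl fun p _ => key q p]
  have L : (∑ q : Fin 3, ∑ p : Fin (t + 1) → Fin 3,
        ((if p 0 = 0 then (1 : ℝ) else 0) *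
            (∏ i : Fin t, cTau μ1 φ1 μ2 φ2 (p i.castSucc) (p i.succ) (x (i.1 + 1))) *
            cTau μ1 φ1 μ2 φ2 (p (Fin.last t)) q (x (t + 1))) *
          (if q = j then (1 : ℝ) else 0))
      = ∑ p : Fin (t + 1) → Fin 3,
        (if p 0 = 0 then (1 : ℝ) else 0) *
          (∏ i : Fin t, cTau μ1 φ1 μ2 φ2 (p i.castSucc) (p i.succ) (x (i.1 + 1))) *
          cTau μ1 φ1 μ2 φ2 (p (Fin.last t)) j (x (t + 1)) := by
    rw [Finset.sum_comm]
    refine Finset.sum_congr rfl fun p _ => ?_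
    simp [mul_ite, mul_one, mul_zero, Finset.sum_ite_eq']
  have R : (∑ k : Fin 3, pSum μ1 φ1 μ2 φ2 x t k * cTau μ1 φ1 μ2 φ2 k j (x (t + 1)))
      = ∑ p : Fin (t + 1) → Fin 3,
        (if p 0 = 0 then (1 : ℝ) else 0) *
          (∏ i : Fin t, cTau μ1 φ1 μ2 φ2 (p i.castSucc) (p i.succ) (x (i.1 + 1))) *
          cTau μ1 φ1 μ2 φ2 (p (Fin.last t)) j (x (t + 1)) := by
    simp only [pSum, Finset.sum_mul]
    rw [Finset.sum_comm]
    refine Finset.sum_congr rfl fun p _ => ?_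
    simp [ite_mul, zero_mul, one_mul, mul_ite, mul_one, mul_zero, Finset.sum_ite_eq,
      Finset.sum_ite_eq']
  rw [L, R]


lemma cScore_eq_pSum {A : Type*} (μ1 φ1 μ2 φ2 : A → ℝ) (x : ℕ → A) (t : ℕ) :
    cScore μ1 φ1 μ2 φ2 x t = pSum μ1 φ1 μ2 φ2 x t 2 := rfl

/-- Proposition 3: the coupled bigram RCNN recurrence
`c¹_t = λ_t·c¹_{t-1} + u¹_t`, `c²_t = λ_t·c²_{t-1} + c¹_{t-1}·u²_t` (both
starting at `0`), where `λ_t = L (x t)` and `uʲ_t = Uⱼ (x t)` depend only on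
`x_t`, satisfies `c²_t = C⟦x_{:t}⟧` for the WFSA `C` with `μ_j = Uⱼ` and
`φ_1 = φ_2 = L`. -/
theorem stmt7 {A : Type*} [Fintype A] (U1 U2 L : A → ℝ) (x : ℕ → A) (c1 c2 : ℕ → ℝ)
    (h10 : c1 0 = 0) (h20 : c2 0 = 0)
    (h1 : ∀ t, 1 ≤ t → c1 t = L (x t) * c1 (t - 1) + U1 (x t))
    (h2 : ∀ t, 1 ≤ t → c2 t = L (x t) * c2 (t - 1) + c1 (t - 1) * U2 (x t)) :
    ∀ t, c2 t = cScore U1 L U2 L x t := by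
  have hs : ∀ t, pSum U1 L U2 L x t 0 = 1 ∧ c1 t = pSum U1 L U2 L x t 1 ∧
      c2 t = pSum U1 L U2 L x t 2 := by
    intro t
    induction t with
    | zero =>
      refine ⟨?_, ?_, ?_⟩ <;> simp [pSum_zero, h10, h20]
    | succ n ih =>
      obtain ⟨i0, i1, i2⟩ := ih
      refine ⟨?_, ?_, ?_⟩
      · rw [pSum_succ, Fin.sum_univ_three, i0]
        simp [cTau]
      · rw [h1 (n + 1) (by omega), pSum_succ, Fin.sum_univ_three, ← i1, i0]
        simp only [Nat.add_sub_cancel]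
        simp [cTau]
        ring
      · rw [h2 (n + 1) (by omega), pSum_succ, Fin.sum_univ_three, ← i1, ← i2, i0]
        simp only [Nat.add_sub_cancel]
        simp [cTau]
        ring
  exact fun t => by rw [cScore_eq_pSum]; exact (hs t).2.2
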